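/- For a compact Hausdorff abelian group K, the topology of pointwise convergence on the (discrete) dual group K^∧ coincides with the Bohr topology of the abstract group K^∧, i.e., with the maximal precompact group topology on K^∧: every homomorphism of K^∧ into 𝕋 is continuous with respect to the topology of pointwise convergence on elements of K. -/

import Mathlib

open Pointwise Function

noncomputable section

/-- The canonical evaluation homomorphism of a topological abelian group into its
Pontryagin bidual, `x ↦ (χ ↦ χ x)`. -/
noncomputable def pontryaginEval (G : Type*) [CommGroup G] [TopologicalSpace G]
    [IsTopologicalGroup G] : G →* PontryaginDual (PontryaginDual G) where
  toFun x :=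
    { toFun := fun χ => χ x
      map_one' := rfl
      map_mul' := fun _ _ => rfl
      continuous_toFun :=
        (continuous_eval_const (F := ContinuousMonoidHom G Circle) x :) }
  map_one' := ContinuousMonoidHom.ext fun χ => map_one χ
  map_mul' x y := ContinuousMonoidHom.ext fun χ => map_mul χ x y

/-- A topological group is protodiscrete (linear) if open subgroups form a
neighborhood base at the identity. -/
def Protodiscrete (G : Type*) [Group G] [TopologicalSpace G] : Prop :=
  ∀ U ∈ nhds (1 : G), ∃ V : Subgroup G, IsOpen (V : Set G) ∧ (V : Set G) ⊆ U

/-- A topological group is precompact (totally bounded) if every neighborhood of the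
identity has finitely many translates covering the group. -/
def Precompact (G : Type*) [Group G] [TopologicalSpace G] : Prop :=
  ∀ U ∈ nhds (1 : G), ∃ F : Finset G, ∀ x : G, ∃ f ∈ F, x ∈ f • U

/-- A topological abelian group is (Pontryagin) reflexive if the canonical evaluation
map into its bidual is a topological isomorphism. -/
def PontryaginReflexive (G : Type*) [CommGroup G] [TopologicalSpace G]
    [IsTopologicalGroup G] : Prop :=
  IsHomeomorph (pontryaginEval G)

/-- A subgroup is dually embedded if every continuous character of it extends to a
continuous character of the ambient group. -/
def DuallyEmbedded {G : Type*} [CommGroup G] [TopologicalSpace G] [IsTopologicalGroup G]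
    (L : Subgroup G) : Prop :=
  ∀ χ : PontryaginDual L, ∃ ψ : PontryaginDual G, ∀ x : L, ψ (x : G) = χ x

/-- The annihilator of a subset `K` of `G` in the dual group. -/
def annihilator {G : Type*} [CommGroup G] [TopologicalSpace G] [IsTopologicalGroup G]
    (K : Set G) : Subgroup (PontryaginDual G) where
  carrier := {χ | ∀ x ∈ K, χ x = 1}
  one_mem' := fun x _ => rfl
  mul_mem' := by
    intro a b ha hb x hx
    show a x * b x = 1
    rw [ha x hx, hb x hx, one_mul]
  inv_mem' := by
    intro a ha x hx
    show (a x)⁻¹ = 1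
    rw [ha x hx, inv_one]

/-- A `P`-space: every countable intersection of open sets is open. -/
def IsPSpace (X : Type*) [TopologicalSpace X] : Prop :=
  ∀ s : ℕ → Set X, (∀ n, IsOpen (s n)) → IsOpen (⋂ n, s n)

/-- A set is `Gδ`-dense if it meets every nonempty `Gδ`-set. -/
def GdeltaDense {X : Type*} [TopologicalSpace X] (s : Set X) : Prop :=
  ∀ t : ℕ → Set X, (∀ n, IsOpen (t n)) → (⋂ n, t n).Nonempty → (s ∩ ⋂ n, t n).Nonempty

/-- The graph of a homomorphism, as a subgroup of the product. -/
def graphSubgroup {H₁ H₂ : Type*} [CommGroup H₁] [CommGroup H₂] (φ : H₁ →* H₂) :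
    Subgroup (H₁ × H₂) where
  carrier := {p | p.2 = φ p.1}
  one_mem' := (map_one φ).symm
  mul_mem' := by
    rintro ⟨a, b⟩ ⟨c, d⟩ hb hd
    simp only [Set.mem_setOf_eq] at *
    simp [hb, hd]
  inv_mem' := by
    rintro ⟨a, b⟩ h
    simp only [Set.mem_setOf_eq] at *
    simp [h]

/-- The Σ-product of `D` copies of the circle group inside `𝕋^D`. -/
def sigmaProd (D : Type*) : Subgroup (D → Circle) where
  carrier := {x | {d | x d ≠ 1}.Countable}
  one_mem' := by simp
  mul_mem' := by
    intro a b ha hb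
    refine Set.Countable.mono ?_ (ha.union hb)
    intro d hd
    simp only [Set.mem_union, Set.mem_setOf_eq]
    by_contra h
    push_neg at h
    exact hd (by show a d * b d = 1; rw [h.1, h.2, one_mul])
  inv_mem' := by
    intro a ha
    refine Set.Countable.mono ?_ ha
    intro d hd
    simp only [Set.mem_setOf_eq] at *
    simpa [inv_eq_one] using hd

/-- The group of continuous `Circle`-valued functions on `Y`, as a subgroup of the
product `Y → Circle`; the subspace topology is the topology of pointwise convergence. -/
def Cp (Y : Type*) [TopologicalSpace Y] : Subgroup (Y → Circle) where
  carrier := {f | Continuous f}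
  one_mem' := continuous_const
  mul_mem' := fun hf hg => hf.mul hg
  inv_mem' := fun hf => hf.inv

/-- The one-point Lindelöfication of a discrete set `D`: the point `none` has the
co-countable sets as neighborhoods, all other points are isolated. -/
def Lind (D : Type*) := Option D

instance (D : Type*) : TopologicalSpace (Lind D) where
  IsOpen U := (none : Option D) ∈ U → {d : D | (some d : Option D) ∉ U}.Countable
  isOpen_univ := by intro _; exact Set.countable_empty.mono (fun d hd => hd (Set.mem_univ _))
  isOpen_inter := by
    intro U V hU hV h
    refine Set.Countable.mono ?_ ((hU h.1).union (hV h.2))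
    intro d hd
    simp only [Set.mem_union, Set.mem_setOf_eq] at *
    by_contra hc
    push_neg at hc
    exact hd ⟨hc.1, hc.2⟩
  isOpen_sUnion := by
    intro S hS h
    obtain ⟨U, hUS, hU⟩ := h
    refine Set.Countable.mono ?_ (hS U hUS hU)
    intro d hd
    simp only [Set.mem_setOf_eq] at *
    exact fun hdU => hd ⟨U, hUS, hdU⟩

end

/-!
Every homomorphism `f : K^∧ → 𝕋` is evaluation at a point of `K`; both topologies on `K^∧` are
then the initial topology of the evaluations at points of `K`.

By compactness of `K` it suffices to realise `f` on finitely many characters `χ₁, …, χₙ`, i.e. to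
show that `p = (f χᵢ)ᵢ` lies in the closed subgroup `L = {(χᵢ k)ᵢ | k ∈ K}` of `𝕋ⁿ`. Otherwise the
monomial characters of `𝕋ⁿ`, whose span is dense in `C(𝕋ⁿ, ℂ)` by Stone–Weierstrass, separate `p`
from `L`: if every monomial trivial on `L` were trivial at `p`, the Haar measure of `L` and its
translate by `p` would integrate all monomials, hence all continuous functions, alike, which fails
for an Urysohn function equal to `1` on `L` and `0` on `p L`. A monomial trivial on `L` but not
at `p` pulls back to the trivial character of `K`, whereas `f` maps it to its value at `p`.
-/

open MeasureTheory

namespace PontryaginDual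

variable {G : Type*} [Monoid G] [TopologicalSpace G]

noncomputable def toComplex : PontryaginDual G →* C(G, ℂ) where
  toFun χ := ⟨fun x => (χ x : ℂ), by fun_prop⟩
  map_one' := by ext; simp
  map_mul' χ ψ := by ext x; exact Circle.coe_mul (χ x) (ψ x)

theorem star_toComplex (χ : PontryaginDual G) : star (toComplex χ) = toComplex χ⁻¹ := by
  ext x
  exact (Circle.coe_inv_eq_conj (χ x)).symm

theorem dense_span_toComplex [CompactSpace G] {S : Subgroup (PontryaginDual G)}
    (hS : ∀ x y : G, x ≠ y → ∃ χ ∈ S, χ x ≠ χ y) :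
    Dense (Submodule.span ℂ (toComplex '' (S : Set (PontryaginDual G))) : Set C(G, ℂ)) := by
  set s : Set C(G, ℂ) := toComplex '' (S : Set (PontryaginDual G))
  have hstar : star s ⊆ s := by
    rintro _ ⟨χ, hχ, hχs⟩
    exact ⟨χ⁻¹, S.inv_mem hχ, by rw [← star_toComplex, hχs, star_star]⟩
  have hspan : ((StarAlgebra.adjoin ℂ s : StarSubalgebra ℂ C(G, ℂ)) : Set C(G, ℂ)) =
      Submodule.span ℂ s := by
    have hmon : (Submonoid.closure s : Set C(G, ℂ)) = s := by
      rw [show s = (S.toSubmonoid.map toComplex : Set C(G, ℂ)) from (Submonoid.coe_map _ _).symm,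
        Submonoid.closure_eq]
    rw [← StarSubalgebra.coe_toSubalgebra, StarAlgebra.adjoin_toSubalgebra,
      Set.union_eq_left.mpr hstar, ← Subalgebra.coe_toSubmodule, Algebra.adjoin_eq_span, hmon]
  have hsep : (StarAlgebra.adjoin ℂ s).SeparatesPoints := by
    intro x y hxy
    obtain ⟨χ, hχS, hχ⟩ := hS x y hxy
    exact ⟨_, ⟨toComplex χ, StarAlgebra.subset_adjoin ℂ s ⟨χ, hχS, rfl⟩, rfl⟩,
      fun h => hχ (Circle.coe_injective h)⟩
  rw [← hspan, dense_iff_closure_eq, ← StarSubalgebra.topologicalClosure_coe,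
    ContinuousMap.starSubalgebra_topologicalClosure_eq_top_of_separatesPoints _ hsep]
  rfl

end PontryaginDual

theorem MonoidHom.integral_circle_eq_zero_of_ne_one {G : Type*} [Group G] [MeasurableSpace G]
    [MeasurableMul G] (μ : Measure G) [μ.IsMulLeftInvariant] {χ : G →* Circle} (hχ : χ ≠ 1) :
    ∫ x, (χ x : ℂ) ∂μ = 0 := by
  obtain ⟨g, hg⟩ : ∃ g, χ g ≠ 1 := by
    by_contra! h
    exact hχ (MonoidHom.ext h)
  have htrans : (χ g : ℂ) * ∫ x, (χ x : ℂ) ∂μ = ∫ x, (χ x : ℂ) ∂μ :=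
    calc (χ g : ℂ) * ∫ x, (χ x : ℂ) ∂μ = ∫ x, (χ (g * x) : ℂ) ∂μ := by
          simp only [map_mul, Circle.coe_mul, integral_const_mul]
      _ = ∫ x, (χ x : ℂ) ∂μ := integral_mul_left_eq_self (fun x => (χ x : ℂ)) g
  exact (mul_left_eq_self₀.mp htrans).resolve_left fun h =>
    hg (Circle.coe_injective (h.trans Circle.coe_one.symm))

namespace ContinuousMap

variable {X 𝕜 : Type*} [TopologicalSpace X] [CompactSpace X] [MeasurableSpace X] [BorelSpace X]
  [RCLike 𝕜]

variable (𝕜) in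
noncomputable def integralCLM (μ : Measure X) [IsFiniteMeasure μ] : C(X, 𝕜) →L[𝕜] 𝕜 :=
  (L1.integralCLM' 𝕜).comp (toLp 1 μ 𝕜)

theorem integralCLM_apply (μ : Measure X) [IsFiniteMeasure μ] (g : C(X, 𝕜)) :
    integralCLM 𝕜 μ g = ∫ x, g x ∂μ := by
  rw [integralCLM, ContinuousLinearMap.comp_apply, ← L1.integral_eq', L1.integral_eq_integral]
  exact integral_congr_ae (coeFn_toLp μ g)

theorem integral_eq_of_dense_span {s : Set C(X, 𝕜)}
    (hs : Dense (Submodule.span 𝕜 s : Set C(X, 𝕜))) {μ ν : Measure X} [IsFiniteMeasure μ]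
    [IsFiniteMeasure ν] (h : ∀ g ∈ s, ∫ x, g x ∂μ = ∫ x, g x ∂ν) (g : C(X, 𝕜)) :
    ∫ x, g x ∂μ = ∫ x, g x ∂ν := by
  have hspan : Set.EqOn (integralCLM 𝕜 μ) (integralCLM 𝕜 ν) (Submodule.span 𝕜 s) :=
    LinearMap.eqOn_span (f := (integralCLM 𝕜 μ : C(X, 𝕜) →ₗ[𝕜] 𝕜)) fun g hg => by
      simpa [integralCLM_apply] using h g hg
  simpa [integralCLM_apply] using congrFun
    (Continuous.ext_on hs (integralCLM 𝕜 μ).continuous (integralCLM 𝕜 ν).continuous hspan) g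

end ContinuousMap

theorem exists_integral_mul_ne_integral {G : Type*} [Group G] [TopologicalSpace G]
    [ContinuousMul G] [NormalSpace G] {L : Subgroup G} (hL : IsClosed (L : Set G)) {p : G}
    (hp : p ∉ L) [MeasurableSpace L] (ν : Measure L) [IsFiniteMeasure ν] [NeZero ν] :
    ∃ g : C(G, ℂ), ∫ l, g (p * l) ∂ν ≠ ∫ l, g l ∂ν := by
  have hdisj : Disjoint ((p * ·) '' (L : Set G)) L := by
    rw [Set.disjoint_left]
    rintro _ ⟨l, hl, rfl⟩ hpl
    exact hp (by simpa using mul_mem hpl (inv_mem hl))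
  obtain ⟨f, hf0, hf1, -⟩ := exists_continuous_zero_one_of_isClosed (s := (p * ·) '' (L : Set G))
    ((Homeomorph.mulLeft p).isClosedMap _ hL) hL hdisj
  refine ⟨ContinuousMap.comp ⟨((↑) : ℝ → ℂ), by fun_prop⟩ f, ?_⟩
  simp only [ContinuousMap.comp_apply, ContinuousMap.coe_mk, hf0 ⟨_, SetLike.coe_mem _, rfl⟩,
    hf1 (SetLike.coe_mem _)]
  simp only [Pi.zero_apply, Pi.one_apply, Complex.ofReal_zero, Complex.ofReal_one,
    integral_const, smul_zero, Complex.real_smul, mul_one]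
  exact_mod_cast (measureReal_univ_ne_zero (μ := ν)).symm

theorem exists_mem_annihilator_apply_ne_one {G : Type*} [CommGroup G] [TopologicalSpace G]
    [IsTopologicalGroup G] [CompactSpace G] [T2Space G] {S : Subgroup (PontryaginDual G)}
    (hS : ∀ x y : G, x ≠ y → ∃ χ ∈ S, χ x ≠ χ y) {L : Subgroup G} (hL : IsClosed (L : Set G))
    {p : G} (hp : p ∉ L) : ∃ χ ∈ S, χ ∈ annihilator (L : Set G) ∧ χ p ≠ 1 := by
  by_contra! h
  borelize G
  have : CompactSpace L := isCompact_iff_compactSpace.mp hL.isCompact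
  let _ : MeasurableSpace L := borel L
  have : BorelSpace L := ⟨rfl⟩
  let ν : Measure L := Measure.haar
  let μ (q : G) : Measure G := ν.map fun l : L => q * (l : G)
  have hμ (q : G) {f : G → ℂ} (hf : Continuous f) : ∫ x, f x ∂μ q = ∫ l, f (q * l) ∂ν :=
    integral_map (by fun_prop : Continuous fun l : L => q * (l : G)).aemeasurable
      hf.aestronglyMeasurable
  have hchar : ∀ χ ∈ S, ∫ x, (χ x : ℂ) ∂μ p = ∫ x, (χ x : ℂ) ∂μ 1 := by
    intro χ hχ
    rw [hμ p (by fun_prop), hμ 1 (by fun_prop)]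
    simp only [map_mul, Circle.coe_mul, one_mul, integral_const_mul]
    by_cases hχL : χ ∈ annihilator (L : Set G)
    · rw [h χ hχ hχL, Circle.coe_one, one_mul]
    · have hres : (χ : G →* Circle).comp L.subtype ≠ 1 := fun h1 =>
        hχL fun x hx => DFunLike.congr_fun h1 ⟨x, hx⟩
      have hzero : ∫ l, (χ l : ℂ) ∂ν = 0 := MonoidHom.integral_circle_eq_zero_of_ne_one ν hres
      rw [hzero, mul_zero]
  obtain ⟨g, hg⟩ := exists_integral_mul_ne_integral hL hp ν
  have hint := ContinuousMap.integral_eq_of_dense_span (PontryaginDual.dense_span_toComplex hS)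
    (by rintro _ ⟨χ, hχ, rfl⟩; exact hchar χ hχ) g
  rw [hμ p g.continuous, hμ 1 g.continuous] at hint
  exact hg (by simpa using hint)

namespace PontryaginDual

variable {K : Type*} [CommGroup K] [TopologicalSpace K] [CompactSpace K]

theorem exists_forall_mem_finset_apply_eq (f : PontryaginDual K →* Circle)
    (u : Finset (PontryaginDual K)) : ∃ k : K, ∀ χ ∈ u, χ k = f χ := by
  let Φ : K →ₜ* (u → Circle) :=
    { toFun := fun k χ => χ.1 k
      map_one' := funext fun χ => _root_.map_one χ.1
      map_mul' := fun a b => funext fun χ => _root_.map_mul χ.1 a b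
      continuous_toFun := continuous_pi fun χ => χ.1.continuous }
  let π (χ : u) : PontryaginDual (u → Circle) := ⟨Pi.evalMonoidHom _ χ, continuous_apply χ⟩
  let p : u → Circle := fun χ => f χ
  have hS : ∀ x y : u → Circle, x ≠ y → ∃ ψ ∈ Subgroup.closure (Set.range π), ψ x ≠ ψ y := by
    intro x y hxy
    obtain ⟨χ, hχ⟩ := Function.ne_iff.mp hxy
    exact ⟨π χ, Subgroup.subset_closure ⟨χ, rfl⟩, hχ⟩
  have hdual : Set.EqOn (f.comp (map Φ).toMonoidHom) (pontryaginEval (u → Circle) p).toMonoidHom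
      (Subgroup.closure (Set.range π)) :=
    MonoidHom.eqOn_closure (by rintro _ ⟨χ, rfl⟩; rfl)
  by_contra! hk
  have hp : p ∉ Φ.toMonoidHom.range := by
    rintro ⟨k, hkp⟩
    obtain ⟨χ, hχ, hne⟩ := hk k
    exact hne (congrFun hkp ⟨χ, hχ⟩)
  obtain ⟨ψ, hψS, hψL, hψp⟩ := exists_mem_annihilator_apply_ne_one hS
    (isCompact_range Φ.continuous).isClosed hp
  have hΦψ : map Φ ψ = 1 := ext fun k => hψL _ ⟨k, rfl⟩
  exact hψp ((hdual hψS).symm.trans (by simp [hΦψ]))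

theorem exists_forall_apply_eq (f : PontryaginDual K →* Circle) :
    ∃ k : K, ∀ χ : PontryaginDual K, χ k = f χ := by
  obtain ⟨k, hk⟩ := CompactSpace.iInter_nonempty (t := fun χ => {k : K | χ k = f χ})
    (fun χ => isClosed_eq χ.continuous continuous_const) fun u => by
      obtain ⟨k, hk⟩ := exists_forall_mem_finset_apply_eq f u
      exact ⟨k, Set.mem_iInter₂.mpr hk⟩
  exact ⟨k, Set.mem_iInter.mp hk⟩

end PontryaginDual

theorem statement15_general (K : Type*) [CommGroup K] [TopologicalSpace K]
    [CompactSpace K] :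
    (TopologicalSpace.induced (fun χ : PontryaginDual K => (χ : K → Circle))
        Pi.topologicalSpace
      = TopologicalSpace.induced
          (fun (χ : PontryaginDual K) => fun (f : PontryaginDual K →* Circle) => f χ)
          Pi.topologicalSpace) ∧
    (∀ f : PontryaginDual K →* Circle,
      @Continuous (PontryaginDual K) Circle
        (TopologicalSpace.induced (fun χ : PontryaginDual K => (χ : K → Circle))
          Pi.topologicalSpace) inferInstance f) := by
  have hpt := induced_to_pi (X := PontryaginDual K) (A := fun _ : K => Circle) (⇑)
  have hbohr := induced_to_pi (X := PontryaginDual K)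
    (A := fun _ : PontryaginDual K →* Circle => Circle) fun χ f => f χ
  have hle (f : PontryaginDual K →* Circle) :
      TopologicalSpace.induced (fun χ : PontryaginDual K => (χ : K → Circle)) Pi.topologicalSpace
        ≤ .induced f inferInstance := by
    obtain ⟨k, hk⟩ := PontryaginDual.exists_forall_apply_eq f
    rw [hpt, show ⇑f = fun χ : PontryaginDual K => χ k from funext fun χ => (hk χ).symm]
    exact iInf_le _ k
  let ev (k : K) : PontryaginDual K →* Circle := ⟨⟨fun χ => χ k, rfl⟩, fun _ _ => rfl⟩
  refine ⟨le_antisymm ?_ ?_, fun f => continuous_iff_le_induced.mpr (hle f)⟩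
  · rw [hbohr]
    exact le_iInf hle
  · rw [hpt, hbohr]
    exact le_iInf fun k => iInf_le _ (ev k)

/-- for a compact Hausdorff abelian group `K`, the topology of pointwise
convergence on the dual `K^∧` coincides with the Bohr topology (the initial topology
from all homomorphisms `K^∧ → 𝕋`); in particular every homomorphism `K^∧ → 𝕋` is
continuous for the pointwise topology. -/
theorem statement15 (K : Type*) [CommGroup K] [TopologicalSpace K] [IsTopologicalGroup K]
    [CompactSpace K] [T2Space K] :
    (TopologicalSpace.induced (fun χ : PontryaginDual K => (χ : K → Circle))
        Pi.topologicalSpace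
      = TopologicalSpace.induced
          (fun (χ : PontryaginDual K) => fun (f : PontryaginDual K →* Circle) => f χ)
          Pi.topologicalSpace) ∧
    (∀ f : PontryaginDual K →* Circle,
      @Continuous (PontryaginDual K) Circle
        (TopologicalSpace.induced (fun χ : PontryaginDual K => (χ : K → Circle))
          Pi.topologicalSpace) inferInstance f) :=
  statement15_general K
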